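/- arXiv:2605.01090 — 5 statements merged into one kernel-verified Lean document; each statement's English description precedes it below -/
import Mathlib

section
/- For every m ≥ 1, V(ξ m) ≤ q^m·V(ξ 0) + a4·∑_{j=0}^{m−1} q^{m−1−j}·‖w j‖², where ā3 := min(a3, a2/2) and q := 1 − ā3/a2. -/
/-!
Since `V ≤ a2‖ξ‖²`, the decrease term dominates a fixed fraction of `V`:
`ā3‖ξ m‖² ≥ (ā3/a2) V(ξ m)` with `ā3 ≤ a3`, so `V(ξ (m+1)) ≤ q V(ξ m) + a4‖w m‖²`.
The cap `ā3 ≤ a2/2` makes `q ≥ 1/2 ≥ 0`, so this one-step bound can be unrolled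
(a discrete Grönwall inequality).
-/

open Finset

theorem le_pow_mul_add_sum_of_le_mul_add {R : Type*} [CommSemiring R] [PartialOrder R]
    [IsOrderedRing R] {q : R} (hq : 0 ≤ q) {v u : ℕ → R}
    (hstep : ∀ n, v (n + 1) ≤ q * v n + u n) (m : ℕ) :
    v m ≤ q ^ m * v 0 + ∑ j ∈ range m, q ^ (m - 1 - j) * u j := by
  induction m with
  | zero => simp
  | succ n ih =>
    have hshift : q * ∑ j ∈ range n, q ^ (n - 1 - j) * u j
        = ∑ j ∈ range n, q ^ (n - j) * u j := by
      rw [mul_sum]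
      refine sum_congr rfl fun j hj => ?_
      rw [show n - j = n - 1 - j + 1 by have := mem_range.1 hj; omega, pow_succ]
      ring
    calc v (n + 1) ≤ q * v n + u n := hstep n
      _ ≤ q * (q ^ n * v 0 + ∑ j ∈ range n, q ^ (n - 1 - j) * u j) + u n := by
        gcongr
      _ = q ^ (n + 1) * v 0 + ∑ j ∈ range (n + 1), q ^ (n + 1 - 1 - j) * u j := by
        rw [mul_add, hshift, sum_range_succ, Nat.add_sub_cancel, Nat.sub_self, pow_zero,
          one_mul, pow_succ']
        ring

theorem le_one_sub_div_mul_add_of_sub_le {a c b s v v' r : ℝ} (ha : 0 < a) (hc : 0 ≤ c)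
    (hcb : c ≤ b) (hs : 0 ≤ s) (hup : v ≤ a * s) (hdec : v' - v ≤ -b * s + r) :
    v' ≤ (1 - c / a) * v + r := by
  have hfrac : c / a * v ≤ b * s :=
    calc c / a * v ≤ c / a * (a * s) := by gcongr
      _ = c * s := by field_simp
      _ ≤ b * s := by gcongr
  linarith

theorem apid_iterated_estimate_general
    {E F : Type*} [NormedAddCommGroup E]
    [NormedAddCommGroup F]
    (ξ : ℕ → E) (w : ℕ → F) (V : E → ℝ) (a2 a3 a4 : ℝ)
    (ha2 : 0 < a2) (ha3 : 0 < a3)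
    (hup : ∀ m, V (ξ m) ≤ a2 * ‖ξ m‖ ^ 2)
    (hdec : ∀ m, V (ξ (m + 1)) - V (ξ m) ≤ -a3 * ‖ξ m‖ ^ 2 + a4 * ‖w m‖ ^ 2) :
    ∀ m, 1 ≤ m →
      V (ξ m) ≤ (1 - min a3 (a2 / 2) / a2) ^ m * V (ξ 0)
        + a4 * ∑ j ∈ Finset.range m,
            (1 - min a3 (a2 / 2) / a2) ^ (m - 1 - j) * ‖w j‖ ^ 2 := by
  intro m _
  have hc : 0 ≤ min a3 (a2 / 2) := le_min ha3.le (by positivity)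
  have hq : 0 ≤ 1 - min a3 (a2 / 2) / a2 :=
    sub_nonneg.2 ((div_le_one ha2).2 ((min_le_right _ _).trans (by linarith)))
  have hstep n := le_one_sub_div_mul_add_of_sub_le ha2 hc (min_le_left _ _)
    (sq_nonneg ‖ξ n‖) (hup n) (hdec n)
  rw [mul_sum]
  simpa only [mul_left_comm] using
    le_pow_mul_add_sum_of_le_mul_add (v := fun n => V (ξ n)) (u := fun n => a4 * ‖w n‖ ^ 2)
      hq hstep m

/-- Iterated Lyapunov estimate for the sampled APID closed loop:
`V(ξ m) ≤ q^m·V(ξ 0) + a4·∑_{j=0}^{m-1} q^(m-1-j)·‖w j‖²`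
with `ā3 := min(a3, a2/2)`, `q := 1 - ā3/a2`. -/
theorem apid_iterated_estimate
    {E F : Type*} [NormedAddCommGroup E] [NormedSpace ℝ E]
    [NormedAddCommGroup F] [NormedSpace ℝ F]
    (ξ : ℕ → E) (w : ℕ → F) (V : E → ℝ) (a1 a2 a3 a4 : ℝ)
    (ha1 : 0 < a1) (ha2 : 0 < a2) (ha3 : 0 < a3) (ha4 : 0 < a4)
    (hlow : ∀ m, a1 * ‖ξ m‖ ^ 2 ≤ V (ξ m))
    (hup : ∀ m, V (ξ m) ≤ a2 * ‖ξ m‖ ^ 2)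
    (hdec : ∀ m, V (ξ (m + 1)) - V (ξ m) ≤ -a3 * ‖ξ m‖ ^ 2 + a4 * ‖w m‖ ^ 2) :
    ∀ m, 1 ≤ m →
      V (ξ m) ≤ (1 - min a3 (a2 / 2) / a2) ^ m * V (ξ 0)
        + a4 * ∑ j ∈ Finset.range m,
            (1 - min a3 (a2 / 2) / a2) ^ (m - 1 - j) * ‖w j‖ ^ 2 :=
  apid_iterated_estimate_general ξ w V a2 a3 a4 ha2 ha3 hup hdec
end

section
/- For every m ≥ 1, V(ξ m) ≤ q^m·V(ξ 0) + (a4·a2/ā3)·sup_{0 ≤ j ≤ m−1} ‖w j‖², where ā3 := min(a3, a2/2) and q := 1 − ā3/a2. -/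
/-!
Bounding `V(ξ m)` above by `a2‖ξ m‖²` turns the decrease condition into the contraction
`V(ξ (m+1)) ≤ q V(ξ m) + a4‖w m‖²` (shrinking `a3` to `ā3` keeps `q ≥ 1/2 ≥ 0`). Unrolling it gives
`q^m V(ξ 0) + (∑_{j<m} q^j) a4 sup_{j<m} ‖w j‖²`, and the geometric sum is at most
`1/(1-q) = a2/ā3`.
-/

open Finset

lemma le_one_sub_div_mul_add_of_sub_le_s3 {v v' x a2 a3 b e : ℝ} (ha2 : 0 < a2) (hb : 0 ≤ b)
    (hba3 : b ≤ a3) (hx : 0 ≤ x) (hup : v ≤ a2 * x) (hdec : v' - v ≤ -a3 * x + e) :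
    v' ≤ (1 - b / a2) * v + e := by
  have hv : b / a2 * v ≤ a3 * x :=
    calc b / a2 * v ≤ b / a2 * (a2 * x) := by gcongr
      _ = b * x := by field_simp
      _ ≤ a3 * x := by gcongr
  linarith

lemma le_pow_mul_add_geom_sum_of_le_mul_add {u d : ℕ → ℝ} {q c S : ℝ} (hq : 0 ≤ q) (hc : 0 ≤ c)
    (hu : ∀ n, u (n + 1) ≤ q * u n + c * d n) :
    ∀ m, (∀ j < m, d j ≤ S) → u m ≤ q ^ m * u 0 + (∑ j ∈ range m, q ^ j) * c * S
  | 0, _ => by simp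
  | m + 1, hS => by
    have ih := le_pow_mul_add_geom_sum_of_le_mul_add hq hc hu m fun j hj => hS j (by omega)
    calc u (m + 1) ≤ q * u m + c * d m := hu m
      _ ≤ q * (q ^ m * u 0 + (∑ j ∈ range m, q ^ j) * c * S) + c * S := by
        gcongr
        exact hS m (by omega)
      _ = q ^ (m + 1) * u 0 + (∑ j ∈ range (m + 1), q ^ j) * c * S := by
        rw [geom_sum_succ]; ring

lemma le_pow_mul_add_div_one_sub_of_le_mul_add {u d : ℕ → ℝ} {q c S : ℝ} (hq : 0 ≤ q)
    (hq1 : q < 1) (hc : 0 ≤ c) (hS0 : 0 ≤ S) (hu : ∀ n, u (n + 1) ≤ q * u n + c * d n) (m : ℕ)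
    (hS : ∀ j < m, d j ≤ S) : u m ≤ q ^ m * u 0 + c / (1 - q) * S := by
  have hgeom : ∑ j ∈ range m, q ^ j ≤ 1 / (1 - q) := by
    have := geom_sum_Ico_le_of_lt_one (x := q) (m := 0) (n := m) hq hq1
    rwa [← range_eq_Ico, pow_zero] at this
  calc u m ≤ q ^ m * u 0 + (∑ j ∈ range m, q ^ j) * c * S :=
        le_pow_mul_add_geom_sum_of_le_mul_add hq hc hu m hS
    _ ≤ q ^ m * u 0 + 1 / (1 - q) * c * S := by gcongr
    _ = q ^ m * u 0 + c / (1 - q) * S := by ring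

theorem apid_sup_estimate_general
    {E F : Type*} [NormedAddCommGroup E]
    [NormedAddCommGroup F]
    (ξ : ℕ → E) (w : ℕ → F) (V : E → ℝ) (a2 a3 a4 : ℝ)
    (ha2 : 0 < a2) (ha3 : 0 < a3) (ha4 : 0 < a4)
    (hup : ∀ m, V (ξ m) ≤ a2 * ‖ξ m‖ ^ 2)
    (hdec : ∀ m, V (ξ (m + 1)) - V (ξ m) ≤ -a3 * ‖ξ m‖ ^ 2 + a4 * ‖w m‖ ^ 2) :
    ∀ m, (hm : 1 ≤ m) →
      V (ξ m) ≤ (1 - min a3 (a2 / 2) / a2) ^ m * V (ξ 0)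
        + a4 * a2 / min a3 (a2 / 2)
            * (Finset.range m).sup'
                (Finset.nonempty_range_iff.mpr (Nat.one_le_iff_ne_zero.mp hm))
                (fun j => ‖w j‖ ^ 2) := by
  intro m hm
  set b := min a3 (a2 / 2)
  have hb : 0 < b := lt_min ha3 (half_pos ha2)
  have hq0 : 0 ≤ 1 - b / a2 := by
    rw [sub_nonneg, div_le_one ha2]; linarith [min_le_right a3 (a2 / 2)]
  have hq1 : 1 - b / a2 < 1 := sub_lt_self 1 (div_pos hb ha2)
  have hstep n : V (ξ (n + 1)) ≤ (1 - b / a2) * V (ξ n) + a4 * ‖w n‖ ^ 2 :=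
    le_one_sub_div_mul_add_of_sub_le_s3 ha2 hb.le (min_le_left _ _) (sq_nonneg _) (hup n) (hdec n)
  have hsup j (hj : j < m) : ‖w j‖ ^ 2 ≤ (range m).sup' (nonempty_range_iff.mpr (by omega))
      (fun j => ‖w j‖ ^ 2) :=
    le_sup' (fun j => ‖w j‖ ^ 2) (mem_range.mpr hj)
  have hconst : a4 / (1 - (1 - b / a2)) = a4 * a2 / b := by
    rw [sub_sub_cancel, div_div_eq_mul_div]
  rw [← hconst]
  exact le_pow_mul_add_div_one_sub_of_le_mul_add (u := fun n => V (ξ n)) hq0 hq1 ha4.le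
    ((sq_nonneg _).trans (hsup 0 hm)) hstep m hsup

/-- Geometric-sum Lyapunov estimate for the sampled APID closed loop:
`V(ξ m) ≤ q^m·V(ξ 0) + (a4·a2/ā3)·sup_{0 ≤ j ≤ m-1} ‖w j‖²`
with `ā3 := min(a3, a2/2)`, `q := 1 - ā3/a2`. -/
theorem apid_sup_estimate
    {E F : Type*} [NormedAddCommGroup E] [NormedSpace ℝ E]
    [NormedAddCommGroup F] [NormedSpace ℝ F]
    (ξ : ℕ → E) (w : ℕ → F) (V : E → ℝ) (a1 a2 a3 a4 : ℝ)
    (ha1 : 0 < a1) (ha2 : 0 < a2) (ha3 : 0 < a3) (ha4 : 0 < a4)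
    (hlow : ∀ m, a1 * ‖ξ m‖ ^ 2 ≤ V (ξ m))
    (hup : ∀ m, V (ξ m) ≤ a2 * ‖ξ m‖ ^ 2)
    (hdec : ∀ m, V (ξ (m + 1)) - V (ξ m) ≤ -a3 * ‖ξ m‖ ^ 2 + a4 * ‖w m‖ ^ 2) :
    ∀ m, (hm : 1 ≤ m) →
      V (ξ m) ≤ (1 - min a3 (a2 / 2) / a2) ^ m * V (ξ 0)
        + a4 * a2 / min a3 (a2 / 2)
            * (Finset.range m).sup'
                (Finset.nonempty_range_iff.mpr (Nat.one_le_iff_ne_zero.mp hm))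
                (fun j => ‖w j‖ ^ 2) :=
  apid_sup_estimate_general ξ w V a2 a3 a4 ha2 ha3 ha4 hup hdec
end

section
/- (Theorem 1, tracking-error bound.) Under the stated assumptions, limsup_{m→∞} |e m| ≤ (L_h·√(a4·a2/(a1·ā3)) + 1)·w̄, where ā3 := min(a3, a2/2); in particular the sampled tracking error is ultimately bounded by a disturbance-dependent constant c_e·w̄ with c_e := L_h·√(a4·a2/(a1·ā3)) + 1 > 0. -/
/-!
Since `V ≤ a2 ‖ξ‖²`, the dissipation inequality turns into the contraction
`V (ξ (m+1)) ≤ (1 - ā3 / a2) V (ξ m) + a4 w̄²`, whose rate lies in `(0, 1/2]` because `ā3 ≤ a2 / 2`.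
Iterating, `V (ξ m)` is ultimately at most its fixed point `a4 a2 w̄² / ā3`, so by `a1 ‖ξ‖² ≤ V`
the state is ultimately at most `√(a4 a2 / (a1 ā3)) w̄`, and `|e m| ≤ L_h ‖ξ m‖ + w̄`.
-/

open Filter Topology

theorem le_pow_mul_add_div_of_le_mul_add {v : ℕ → ℝ} {q C : ℝ} (hq0 : 0 ≤ q) (hq1 : q < 1)
    (hC : 0 ≤ C) (h : ∀ n, v (n + 1) ≤ q * v n + C) (n : ℕ) :
    v n ≤ q ^ n * v 0 + C / (1 - q) := by
  have h1q : 0 < 1 - q := sub_pos.2 hq1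
  induction n with
  | zero => simpa using div_nonneg hC h1q.le
  | succ n ih =>
    have hfix : q * (C / (1 - q)) + C = C / (1 - q) := by field_simp; ring
    calc v (n + 1) ≤ q * v n + C := h n
      _ ≤ q * (q ^ n * v 0 + C / (1 - q)) + C := by gcongr
      _ = q ^ (n + 1) * v 0 + C / (1 - q) := by linear_combination hfix

theorem limsup_le_of_le_of_tendsto {α β : Type*} [ConditionallyCompleteLinearOrder β]
    [TopologicalSpace β] [OrderTopology β] {l : Filter α} [l.NeBot] {u g : α → β} {b : β}
    (hu : IsBoundedUnder (· ≥ ·) l u) (hle : u ≤ᶠ[l] g) (hg : Tendsto g l (𝓝 b)) :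
    limsup u l ≤ b :=
  (limsup_le_limsup hle hu.isCoboundedUnder_le hg.isBoundedUnder_le).trans_eq hg.limsup_eq

section Lyapunov

variable {E F : Type*} [SeminormedAddGroup E] [SeminormedAddGroup F]
  {ξ : ℕ → E} {w : ℕ → F} {V : E → ℝ} {a1 a2 a3 a4 D : ℝ}

theorem lyapunov_succ_le_one_sub_mul_add {b : ℝ} (ha2 : 0 < a2) (ha4 : 0 ≤ a4)
    (hb : 0 ≤ b) (hba3 : b ≤ a3)
    (hup : ∀ m, V (ξ m) ≤ a2 * ‖ξ m‖ ^ 2)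
    (hdec : ∀ m, V (ξ (m + 1)) - V (ξ m) ≤ -a3 * ‖ξ m‖ ^ 2 + a4 * ‖w m‖ ^ 2)
    (hw : ∀ m, ‖w m‖ ≤ D) (m : ℕ) :
    V (ξ (m + 1)) ≤ (1 - b / a2) * V (ξ m) + a4 * D ^ 2 := by
  have hV : b / a2 * V (ξ m) ≤ b * ‖ξ m‖ ^ 2 := by
    calc b / a2 * V (ξ m) ≤ b / a2 * (a2 * ‖ξ m‖ ^ 2) := by gcongr; exact hup m
      _ = b * ‖ξ m‖ ^ 2 := by field_simp
  have hξ : b * ‖ξ m‖ ^ 2 ≤ a3 * ‖ξ m‖ ^ 2 := by gcongr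
  have hwD : a4 * ‖w m‖ ^ 2 ≤ a4 * D ^ 2 := by gcongr; exact hw m
  linarith [hdec m]

theorem exists_norm_le_tendsto_of_lyapunov (ha1 : 0 < a1) (ha2 : 0 < a2) (ha3 : 0 < a3)
    (ha4 : 0 ≤ a4)
    (hlow : ∀ m, a1 * ‖ξ m‖ ^ 2 ≤ V (ξ m))
    (hup : ∀ m, V (ξ m) ≤ a2 * ‖ξ m‖ ^ 2)
    (hdec : ∀ m, V (ξ (m + 1)) - V (ξ m) ≤ -a3 * ‖ξ m‖ ^ 2 + a4 * ‖w m‖ ^ 2)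
    (hw : ∀ m, ‖w m‖ ≤ D) :
    ∃ r : ℕ → ℝ, (∀ m, ‖ξ m‖ ≤ r m) ∧
      Tendsto r atTop (𝓝 (√(a4 * a2 / (a1 * min a3 (a2 / 2))) * D)) := by
  set b := min a3 (a2 / 2)
  have hb : 0 < b := lt_min ha3 (half_pos ha2)
  have hba2 : b / a2 ≤ 1 / 2 := by
    rw [div_le_iff₀ ha2]; linarith [min_le_right a3 (a2 / 2)]
  have hD : 0 ≤ D := (norm_nonneg _).trans (hw 0)
  set q := 1 - b / a2
  have hq1 : q < 1 := by have := div_pos hb ha2; linarith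
  have hstep : ∀ m, V (ξ (m + 1)) ≤ q * V (ξ m) + a4 * D ^ 2 :=
    lyapunov_succ_le_one_sub_mul_add ha2 ha4 hb.le (min_le_left _ _) hup hdec hw
  have hV := le_pow_mul_add_div_of_le_mul_add (v := fun m => V (ξ m)) (by linarith) hq1
    (by positivity) hstep
  refine ⟨fun m => √((q ^ m * V (ξ 0) + a4 * D ^ 2 / (1 - q)) / a1), fun m => ?_, ?_⟩
  · refine Real.le_sqrt_of_sq_le ?_
    rw [le_div_iff₀ ha1]
    linarith [hlow m, hV m]
  · have hq : Tendsto (fun m : ℕ => q ^ m) atTop (𝓝 0) :=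
      tendsto_pow_atTop_nhds_zero_of_abs_lt_one (abs_lt.2 ⟨by linarith, hq1⟩)
    have hlim : a4 * D ^ 2 / (1 - q) / a1 = a4 * a2 / (a1 * b) * D ^ 2 := by
      simp only [q, sub_sub_cancel]; field_simp
    convert (((hq.mul_const (V (ξ 0))).add_const _).div_const a1).sqrt using 2
    rw [zero_mul, zero_add, hlim, Real.sqrt_mul (by positivity), Real.sqrt_sq hD]

end Lyapunov

theorem apid_tracking_error_bound_general
    {E F Y : Type*} [NormedAddCommGroup E]
    [NormedAddCommGroup F]
    [NormedAddCommGroup Y]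
    (ξ : ℕ → E) (w : ℕ → F) (V : E → ℝ) (a1 a2 a3 a4 : ℝ)
    (ha1 : 0 < a1) (ha2 : 0 < a2) (ha3 : 0 < a3) (ha4 : 0 < a4)
    (hlow : ∀ m, a1 * ‖ξ m‖ ^ 2 ≤ V (ξ m))
    (hup : ∀ m, V (ξ m) ≤ a2 * ‖ξ m‖ ^ 2)
    (hdec : ∀ m, V (ξ (m + 1)) - V (ξ m) ≤ -a3 * ‖ξ m‖ ^ 2 + a4 * ‖w m‖ ^ 2)
    (h : Y → ℝ) (y : ℕ → Y) (ystar : Y) (η : ℕ → ℝ) (e : ℕ → ℝ)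
    (he : ∀ m, e m = h ystar - h (y m) - η m)
    (Lh : ℝ) (hLh : 0 < Lh)
    (hLip : ∀ m, |h (y m) - h ystar| ≤ Lh * ‖y m - ystar‖)
    (hcomp : ∀ m, ‖y m - ystar‖ ≤ ‖ξ m‖)
    (hnoise : ∀ m, |η m| ≤ ‖w m‖)
    (hwbdd : BddAbove (Set.range fun j => ‖w j‖)) :
    Filter.limsup (fun m => |e m|) Filter.atTop
      ≤ (Lh * Real.sqrt (a4 * a2 / (a1 * min a3 (a2 / 2))) + 1) * (⨆ j, ‖w j‖) := by
  set wb := ⨆ j, ‖w j‖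
  have hw : ∀ m, ‖w m‖ ≤ wb := le_ciSup hwbdd
  obtain ⟨r, hξr, hr⟩ :=
    exists_norm_le_tendsto_of_lyapunov ha1 ha2 ha3 ha4.le hlow hup hdec hw
  have he_le : ∀ m, |e m| ≤ Lh * r m + wb := fun m =>
    calc |e m| = |(h (y m) - h ystar) + η m| := by rw [he m, ← abs_neg]; ring_nf
      _ ≤ |h (y m) - h ystar| + |η m| := abs_add_le _ _
      _ ≤ Lh * r m + wb := by
        gcongr
        · exact (hLip m).trans (by gcongr; exact (hcomp m).trans (hξr m))
        · exact (hnoise m).trans (hw m)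
  refine (limsup_le_of_le_of_tendsto (isBoundedUnder_of_eventually_ge (.of_forall fun m =>
    abs_nonneg (e m))) (.of_forall he_le) ((hr.const_mul Lh).add_const wb)).trans_eq ?_
  ring

/-- Theorem 1 (tracking-error bound for APID): with sampled tracking error
`e m := h(y*) − h(y m) − η m`, one has
`limsup_{m→∞} |e m| ≤ (L_h·√(a4·a2/(a1·ā3)) + 1)·w̄`, where
`ā3 := min(a3, a2/2)` and `w̄ := ⨆ j, ‖w j‖`; that is, the sampled tracking
error is ultimately bounded by `c_e·w̄` with
`c_e := L_h·√(a4·a2/(a1·ā3)) + 1 > 0`. -/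
theorem apid_tracking_error_bound
    {E F Y : Type*} [NormedAddCommGroup E] [NormedSpace ℝ E]
    [NormedAddCommGroup F] [NormedSpace ℝ F]
    [NormedAddCommGroup Y] [NormedSpace ℝ Y]
    (ξ : ℕ → E) (w : ℕ → F) (V : E → ℝ) (a1 a2 a3 a4 : ℝ)
    (ha1 : 0 < a1) (ha2 : 0 < a2) (ha3 : 0 < a3) (ha4 : 0 < a4)
    (hlow : ∀ m, a1 * ‖ξ m‖ ^ 2 ≤ V (ξ m))
    (hup : ∀ m, V (ξ m) ≤ a2 * ‖ξ m‖ ^ 2)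
    (hdec : ∀ m, V (ξ (m + 1)) - V (ξ m) ≤ -a3 * ‖ξ m‖ ^ 2 + a4 * ‖w m‖ ^ 2)
    (h : Y → ℝ) (y : ℕ → Y) (ystar : Y) (η : ℕ → ℝ) (e : ℕ → ℝ)
    (he : ∀ m, e m = h ystar - h (y m) - η m)
    (Lh : ℝ) (hLh : 0 < Lh)
    (hLip : ∀ m, |h (y m) - h ystar| ≤ Lh * ‖y m - ystar‖)
    (hcomp : ∀ m, ‖y m - ystar‖ ≤ ‖ξ m‖)
    (hnoise : ∀ m, |η m| ≤ ‖w m‖)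
    (hwbdd : BddAbove (Set.range fun j => ‖w j‖)) :
    Filter.limsup (fun m => |e m|) Filter.atTop
      ≤ (Lh * Real.sqrt (a4 * a2 / (a1 * min a3 (a2 / 2))) + 1) * (⨆ j, ‖w j‖) :=
  apid_tracking_error_bound_general ξ w V a1 a2 a3 a4 ha1 ha2 ha3 ha4 hlow hup hdec h y ystar η e he
    Lh hLh hLip hcomp hnoise hwbdd
end

section
/- (Projected gain-update descent.) There exist σ_φ ∈ (0,1) and c_r > 0 such that for all m ∈ ℕ: ‖φ(m+1) − φ*‖² − ‖φ m − φ*‖² ≤ −σ_φ·‖φ m − φ*‖² + c_r·‖r m‖². -/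
/-!
The projection onto a convex set is nonexpansive towards every point of the set, so it suffices
to bound the unprojected step with error `e = φ m - φ*`. The gradient part contracts,
`‖e - a g‖² ≤ (1 - a(2μ - aL²))‖e‖²`, and on the admissible step sizes
`a(2μ - aL²) ≥ κ := αlo(2μ - αhi L²) > 0`. The residual is split off by the weighted triangle
inequality `‖u + v‖² ≤ (1 + κ/2)‖u‖² + (1 + 2/κ)‖v‖²`, which leaves the rate `1 - κ/2`.
-/

open RealInnerProductSpace

theorem norm_add_sq_le_of_pos {E : Type*} [SeminormedAddGroup E] (u v : E) {η : ℝ} (hη : 0 < η) :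
    ‖u + v‖ ^ 2 ≤ (1 + η) * ‖u‖ ^ 2 + (1 + η⁻¹) * ‖v‖ ^ 2 := by
  have hyoung : 2 * ‖u‖ * ‖v‖ ≤ η * ‖u‖ ^ 2 + η⁻¹ * ‖v‖ ^ 2 := by
    have := sq_nonneg (η * ‖u‖ - ‖v‖)
    rw [← mul_le_mul_iff_right₀ hη]
    field_simp
    nlinarith
  calc ‖u + v‖ ^ 2 ≤ (‖u‖ + ‖v‖) ^ 2 := pow_le_pow_left₀ (norm_nonneg _) (norm_add_le u v) 2
    _ ≤ _ := by nlinarith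

section

variable {F : Type*} [NormedAddCommGroup F] [InnerProductSpace ℝ F]

theorem Convex.norm_sub_le_norm_sub_of_isMinOn {K : Set F} (hK : Convex ℝ K) {x p z : F}
    (hp : p ∈ K) (hmin : IsMinOn (fun y ↦ ‖x - y‖) K p) (hz : z ∈ K) :
    ‖p - z‖ ≤ ‖x - z‖ := by
  have : Nonempty K := ⟨⟨p, hp⟩⟩
  have hinf : ‖x - p‖ = ⨅ w : K, ‖x - w‖ :=
    le_antisymm (le_ciInf fun w ↦ isMinOn_iff.mp hmin w w.2)
      (ciInf_le (f := fun w : K ↦ ‖x - w‖)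
        ⟨0, Set.forall_mem_range.mpr fun _ ↦ norm_nonneg _⟩ ⟨p, hp⟩)
  have hvar : ⟪x - p, z - p⟫ ≤ 0 := (norm_eq_iInf_iff_real_inner_le_zero hK hp).mp hinf z hz
  have hsplit : ‖x - z‖ ^ 2 = ‖x - p‖ ^ 2 - 2 * ⟪x - p, z - p⟫ + ‖p - z‖ ^ 2 := by
    rw [← sub_add_sub_cancel x p z, norm_add_sq_real, ← neg_sub z p, inner_neg_right]
    ring
  refine (pow_le_pow_iff_left₀ (norm_nonneg _) (norm_nonneg _) two_ne_zero).mp ?_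
  nlinarith [sq_nonneg ‖x - p‖]

theorem norm_sub_smul_sq_le_of_strongly_monotone {e g : F} {μ L a : ℝ}
    (hmono : μ * ‖e‖ ^ 2 ≤ ⟪g, e⟫) (hgrow : ‖g‖ ≤ L * ‖e‖) (ha : 0 ≤ a) :
    ‖e - a • g‖ ^ 2 ≤ (1 - a * (2 * μ - a * L ^ 2)) * ‖e‖ ^ 2 := by
  have hg2 : ‖g‖ ^ 2 ≤ (L * ‖e‖) ^ 2 := pow_le_pow_left₀ (norm_nonneg g) hgrow 2
  rw [norm_sub_sq_real, norm_smul, real_inner_smul_right, real_inner_comm, Real.norm_eq_abs,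
    mul_pow, sq_abs]
  nlinarith [mul_le_mul_of_nonneg_left hmono ha, mul_le_mul_of_nonneg_left hg2 (sq_nonneg a)]


theorem norm_sub_smul_add_sq_le_of_strongly_monotone {e g r : F} {μ L a b c : ℝ}
    (hmono : μ * ‖e‖ ^ 2 ≤ ⟪g, e⟫) (hgrow : ‖g‖ ≤ L * ‖e‖)
    (hb : 0 < b) (hba : b ≤ a) (hac : a ≤ c) (hc : c * L ^ 2 < 2 * μ) :
    ‖e - a • (g + r)‖ ^ 2 ≤ (1 - b * (2 * μ - c * L ^ 2) / 2) * ‖e‖ ^ 2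
      + (1 + (b * (2 * μ - c * L ^ 2) / 2)⁻¹) * c ^ 2 * ‖r‖ ^ 2 := by
  set κ := b * (2 * μ - c * L ^ 2)
  have hκ : 0 < κ := mul_pos hb (by linarith)
  have ha : 0 ≤ a := hb.le.trans hba
  have hgain : κ ≤ a * (2 * μ - a * L ^ 2) := by
    have : c * L ^ 2 - a * L ^ 2 ≥ 0 := by nlinarith [sq_nonneg L]
    nlinarith
  have hgrad : ‖e - a • g‖ ^ 2 ≤ (1 - κ) * ‖e‖ ^ 2 :=
    (norm_sub_smul_sq_le_of_strongly_monotone hmono hgrow ha).trans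
      (mul_le_mul_of_nonneg_right (by linarith) (sq_nonneg _))
  have hres : ‖-(a • r)‖ ^ 2 ≤ c ^ 2 * ‖r‖ ^ 2 := by
    rw [norm_neg, norm_smul, mul_pow, Real.norm_eq_abs, sq_abs]
    gcongr
  calc ‖e - a • (g + r)‖ ^ 2 = ‖(e - a • g) + -(a • r)‖ ^ 2 := by
        rw [smul_add, sub_add_eq_sub_sub, sub_eq_add_neg (e - a • g)]
    _ ≤ (1 + κ / 2) * ‖e - a • g‖ ^ 2 + (1 + (κ / 2)⁻¹) * ‖-(a • r)‖ ^ 2 :=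
        norm_add_sq_le_of_pos _ _ (half_pos hκ)
    _ ≤ (1 + κ / 2) * ((1 - κ) * ‖e‖ ^ 2) + (1 + (κ / 2)⁻¹) * (c ^ 2 * ‖r‖ ^ 2) := by
        gcongr
    _ ≤ (1 - κ / 2) * ‖e‖ ^ 2 + (1 + (κ / 2)⁻¹) * c ^ 2 * ‖r‖ ^ 2 := by
        nlinarith [sq_nonneg ‖e‖, mul_nonneg (sq_nonneg κ) (sq_nonneg ‖e‖)]

end


theorem rapid_projected_gain_descent_general
    {H : Type*} [NormedAddCommGroup H] [InnerProductSpace ℝ H]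
    (Φ : Set H) (hconv : Convex ℝ Φ)
    (proj : H → H)
    (hproj : ∀ x, proj x ∈ Φ ∧ ∀ y ∈ Φ, ‖x - proj x‖ ≤ ‖x - y‖)
    (φ : ℕ → H) (φstar : H) (hφstar : φstar ∈ Φ)
    (g r : ℕ → H) (α : ℕ → ℝ) (μ L αlo αhi : ℝ)
    (hL : 0 < L)
    (hαlo : 0 < αlo) (hαle : αlo ≤ αhi) (hαhi : αhi < 2 * μ / L ^ 2)
    (hα : ∀ m, αlo ≤ α m ∧ α m ≤ αhi)
    (hupd : ∀ m, φ (m + 1) = proj (φ m - α m • (g m + r m)))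
    (hmono : ∀ m, μ * ‖φ m - φstar‖ ^ 2 ≤ @inner ℝ H _ (g m) (φ m - φstar))
    (hgrow : ∀ m, ‖g m‖ ≤ L * ‖φ m - φstar‖) :
    ∃ σφ ∈ Set.Ioo (0 : ℝ) 1, ∃ cr > (0 : ℝ), ∀ m,
      ‖φ (m + 1) - φstar‖ ^ 2 - ‖φ m - φstar‖ ^ 2
        ≤ -σφ * ‖φ m - φstar‖ ^ 2 + cr * ‖r m‖ ^ 2 := by
  have hstable : αhi * L ^ 2 < 2 * μ := (lt_div_iff₀ (by positivity)).mp hαhi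
  set κ := αlo * (2 * μ - αhi * L ^ 2)
  have hκ : 0 < κ := mul_pos hαlo (by linarith)
  refine ⟨min (κ / 2) (1 / 2), ⟨by positivity, (min_le_right _ _).trans_lt (by norm_num)⟩,
    (1 + (κ / 2)⁻¹) * αhi ^ 2, by have := hαlo.trans_le hαle; positivity, fun m ↦ ?_⟩
  have hnonexp : ‖φ (m + 1) - φstar‖ ≤ ‖φ m - φstar - α m • (g m + r m)‖ := by
    rw [hupd m, sub_right_comm]
    exact hconv.norm_sub_le_norm_sub_of_isMinOn (hproj _).1 (isMinOn_iff.mpr (hproj _).2) hφstar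
  have hstep := norm_sub_smul_add_sq_le_of_strongly_monotone (r := r m) (hmono m) (hgrow m)
    hαlo (hα m).1 (hα m).2 hstable
  have hσ := mul_le_mul_of_nonneg_right (min_le_left (κ / 2) (1 / 2)) (sq_nonneg ‖φ m - φstar‖)
  nlinarith [pow_le_pow_left₀ (norm_nonneg _) hnonexp 2]

/-- Projected gain-update descent for RAPID: under the local risk-gradient
conditions and admissible step sizes, the projected update
`φ(m+1) = Π_Φ(φ m − α m·(g m + r m))` satisfies, for some `σ_φ ∈ (0,1)` and
`c_r > 0`,
`‖φ(m+1) − φ*‖² − ‖φ m − φ*‖² ≤ −σ_φ·‖φ m − φ*‖² + c_r·‖r m‖²` for all `m`.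
The metric projection `Π_Φ` onto the nonempty closed convex set `Φ` is
characterized by the hypothesis `hproj`. -/
theorem rapid_projected_gain_descent
    {H : Type*} [NormedAddCommGroup H] [InnerProductSpace ℝ H] [CompleteSpace H]
    (Φ : Set H) (hne : Φ.Nonempty) (hclosed : IsClosed Φ) (hconv : Convex ℝ Φ)
    (proj : H → H)
    (hproj : ∀ x, proj x ∈ Φ ∧ ∀ y ∈ Φ, ‖x - proj x‖ ≤ ‖x - y‖)
    (φ : ℕ → H) (φstar : H) (hφstar : φstar ∈ Φ) (hφ0 : φ 0 ∈ Φ)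
    (g r : ℕ → H) (α : ℕ → ℝ) (μ L αlo αhi : ℝ)
    (hμ : 0 < μ) (hL : 0 < L)
    (hαlo : 0 < αlo) (hαle : αlo ≤ αhi) (hαhi : αhi < 2 * μ / L ^ 2)
    (hα : ∀ m, αlo ≤ α m ∧ α m ≤ αhi)
    (hupd : ∀ m, φ (m + 1) = proj (φ m - α m • (g m + r m)))
    (hmono : ∀ m, μ * ‖φ m - φstar‖ ^ 2 ≤ @inner ℝ H _ (g m) (φ m - φstar))
    (hgrow : ∀ m, ‖g m‖ ≤ L * ‖φ m - φstar‖) :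
    ∃ σφ ∈ Set.Ioo (0 : ℝ) 1, ∃ cr > (0 : ℝ), ∀ m,
      ‖φ (m + 1) - φstar‖ ^ 2 - ‖φ m - φstar‖ ^ 2
        ≤ -σφ * ‖φ m - φstar‖ ^ 2 + cr * ‖r m‖ ^ 2 :=
  rapid_projected_gain_descent_general Φ hconv proj hproj φ φstar hφstar g r α μ L αlo αhi hL hαlo
    hαle hαhi hα hupd hmono hgrow
end

section
/- (Theorem 2, main ISS estimate for RAPID.) Under the stated assumptions, there exist constants C1, C2 > 0 and ρ ∈ (0,1) such that for every m ≥ 1: √(‖χ m‖² + ‖φ m − φ*‖²) ≤ C1·ρ^m·√(‖χ 0‖² + ‖φ 0 − φ*‖²) + C2·sup_{0 ≤ j ≤ m−1} ‖w j‖; in particular, the sampled RAPID closed loop is locally input-to-state stable with respect to the disturbance sequence w. -/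
/-!
The gain error `‖φ m - φ*‖²` contracts by a factor `θ < 1` up to a multiple of `‖w m‖²`: the
projection onto the convex set `Φ` is nonexpansive towards `φ* ∈ Φ`, and a gradient step of
size at most `αhi < 2μ/L²` on the strongly monotone field `g` is a contraction, while the
residual `r` is split off with Young's inequality. Adding a large enough multiple of this error
to the plant Lyapunov function `V_y` absorbs the coupling term `b4 ‖φ m - φ*‖²`, so the sum
`W m` satisfies `W (m + 1) ≤ ρ W m + C ‖w m‖²` with `ρ < 1`. Unrolling this recursion and
comparing `W` with `‖χ m‖² + ‖φ m - φ*‖²` gives the estimate, with rate `√ρ`.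
-/

open scoped RealInnerProductSpace

theorem add_sq_le_one_add_mul_sq_add {ε : ℝ} (hε : 0 < ε) (x y : ℝ) :
    (x + y) ^ 2 ≤ (1 + ε) * x ^ 2 + (1 + ε⁻¹) * y ^ 2 := by
  have key : 0 ≤ (ε * x - y) ^ 2 / ε := by positivity
  have expand : (1 + ε) * x ^ 2 + (1 + ε⁻¹) * y ^ 2 - (x + y) ^ 2 = (ε * x - y) ^ 2 / ε := by
    field_simp; ring
  linarith

theorem norm_add_sq_le_one_add_mul_sq_add {E : Type*} [SeminormedAddCommGroup E] {ε : ℝ}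
    (hε : 0 < ε) (u v : E) :
    ‖u + v‖ ^ 2 ≤ (1 + ε) * ‖u‖ ^ 2 + (1 + ε⁻¹) * ‖v‖ ^ 2 :=
  (pow_le_pow_left₀ (norm_nonneg _) (norm_add_le u v) 2).trans
    (add_sq_le_one_add_mul_sq_add hε _ _)

section InnerProduct

variable {H : Type*} [NormedAddCommGroup H] [InnerProductSpace ℝ H]

theorem Convex.norm_sub_le_of_forall_norm_sub_le {K : Set H} (hK : Convex ℝ K) {x p z : H}
    (hp : p ∈ K) (hmin : ∀ y ∈ K, ‖x - p‖ ≤ ‖x - y‖) (hz : z ∈ K) :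
    ‖p - z‖ ≤ ‖x - z‖ := by
  have : Nonempty K := ⟨⟨p, hp⟩⟩
  have hinf : ‖x - p‖ = ⨅ y : K, ‖x - y‖ :=
    le_antisymm (le_ciInf fun y => hmin y y.2)
      (ciInf_le ⟨0, Set.forall_mem_range.mpr fun _ => norm_nonneg _⟩ (⟨p, hp⟩ : K))
  have hobtuse : ⟪x - p, z - p⟫ ≤ 0 := (norm_eq_iInf_iff_real_inner_le_zero hK hp).mp hinf z hz
  have expand : ‖x - z‖ ^ 2 = ‖x - p‖ ^ 2 - 2 * ⟪x - p, z - p⟫ + ‖p - z‖ ^ 2 := by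
    rw [show x - z = (x - p) - (z - p) by abel, norm_sub_sq_real, norm_sub_rev z p]
  refine (pow_le_pow_iff_left₀ (norm_nonneg _) (norm_nonneg _) two_ne_zero).mp ?_
  nlinarith [sq_nonneg ‖x - p‖]

theorem norm_sub_smul_sq_le {μ L a : ℝ} {e g : H} (ha : 0 ≤ a)
    (hmono : μ * ‖e‖ ^ 2 ≤ ⟪g, e⟫) (hgrow : ‖g‖ ≤ L * ‖e‖) :
    ‖e - a • g‖ ^ 2 ≤ (1 - a * (2 * μ - a * L ^ 2)) * ‖e‖ ^ 2 := by
  have hg2 : ‖g‖ ^ 2 ≤ L ^ 2 * ‖e‖ ^ 2 := by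
    rw [← mul_pow]; exact pow_le_pow_left₀ (norm_nonneg _) hgrow 2
  rw [norm_sub_sq_real, real_inner_smul_right, real_inner_comm, norm_smul, mul_pow,
    Real.norm_eq_abs, sq_abs]
  nlinarith [mul_le_mul_of_nonneg_left hmono ha, mul_le_mul_of_nonneg_left hg2 (sq_nonneg a)]

theorem exists_norm_sub_smul_add_sq_le {μ L αlo αhi : ℝ} (hL : 0 < L) (hαlo : 0 < αlo)
    (hαhi : αhi < 2 * μ / L ^ 2) :
    ∃ θ < 1, ∃ cw ≥ 0, ∀ (a : ℝ) (e g r : H), αlo ≤ a → a ≤ αhi →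
      μ * ‖e‖ ^ 2 ≤ ⟪g, e⟫ → ‖g‖ ≤ L * ‖e‖ →
      ‖e - a • (g + r)‖ ^ 2 ≤ θ * ‖e‖ ^ 2 + cw * ‖r‖ ^ 2 := by
  set δ := 2 * μ - αhi * L ^ 2
  have hδ : 0 < δ := by
    have := (lt_div_iff₀ (by positivity : (0 : ℝ) < L ^ 2)).mp hαhi
    linarith
  set q := max (1 - αlo * δ) 0
  have hq1 : q < 1 := max_lt (by linarith [mul_pos hαlo hδ]) one_pos
  set ε := (1 - q) / 2
  have hε : 0 < ε := by simp only [ε]; linarith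
  refine ⟨q + ε, by simp only [ε]; linarith, (1 + ε⁻¹) * αhi ^ 2, by positivity,
    fun a e g r hlo hhi hmono hgrow => ?_⟩
  have ha : 0 ≤ a := hαlo.le.trans hlo
  have hdescent : ‖e - a • g‖ ^ 2 ≤ q * ‖e‖ ^ 2 := by
    refine (norm_sub_smul_sq_le ha hmono hgrow).trans
      (mul_le_mul_of_nonneg_right ?_ (by positivity))
    have : αlo * δ ≤ a * (2 * μ - a * L ^ 2) :=
      mul_le_mul hlo (by linarith [mul_le_mul_of_nonneg_right hhi (sq_nonneg L)]) hδ.le ha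
    exact (by linarith : 1 - a * (2 * μ - a * L ^ 2) ≤ 1 - αlo * δ).trans (le_max_left _ _)
  have hpert : ‖a • r‖ ^ 2 ≤ αhi ^ 2 * ‖r‖ ^ 2 := by
    rw [norm_smul, mul_pow, Real.norm_eq_abs, sq_abs]
    gcongr
  calc ‖e - a • (g + r)‖ ^ 2 = ‖(e - a • g) + -(a • r)‖ ^ 2 := by
        rw [smul_add]; congr 2; abel
    _ ≤ (1 + ε) * ‖e - a • g‖ ^ 2 + (1 + ε⁻¹) * ‖a • r‖ ^ 2 := by
        simpa only [norm_neg] using norm_add_sq_le_one_add_mul_sq_add hε (e - a • g) (-(a • r))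
    _ ≤ (1 + ε) * (q * ‖e‖ ^ 2) + (1 + ε⁻¹) * (αhi ^ 2 * ‖r‖ ^ 2) := by gcongr
    _ ≤ (q + ε) * ‖e‖ ^ 2 + (1 + ε⁻¹) * αhi ^ 2 * ‖r‖ ^ 2 := by
        have : ε * q ≤ ε := mul_le_of_le_one_right hε.le hq1.le
        nlinarith [sq_nonneg ‖e‖]

end InnerProduct

theorem le_pow_mul_add_of_le_mul_add {W u : ℕ → ℝ} {ρ C M : ℝ} (hρ : 0 ≤ ρ) (hρ1 : ρ < 1)
    (hC : 0 ≤ C) (hM : 0 ≤ M) (hW : ∀ m, W (m + 1) ≤ ρ * W m + C * u m) :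
    ∀ m, (∀ j < m, u j ≤ M) → W m ≤ ρ ^ m * W 0 + C / (1 - ρ) * M := by
  have hK : ρ * (C / (1 - ρ)) + C = C / (1 - ρ) := by
    field_simp [(sub_pos.mpr hρ1).ne']; ring
  intro m
  induction m with
  | zero => intro _; simp only [pow_zero, one_mul, le_add_iff_nonneg_right]; positivity
  | succ n ih =>
    intro hu
    have hWn := ih fun j hj => hu j (hj.trans n.lt_succ_self)
    calc W (n + 1) ≤ ρ * W n + C * u n := hW n
      _ ≤ ρ * (ρ ^ n * W 0 + C / (1 - ρ) * M) + C * M := by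
          gcongr; exact hu n n.lt_succ_self
      _ = ρ ^ (n + 1) * W 0 + (ρ * (C / (1 - ρ)) + C) * M := by ring
      _ = ρ ^ (n + 1) * W 0 + C / (1 - ρ) * M := by rw [hK]

/-- The weight of `p` in the composite Lyapunov function is `c = 2 b4 / (1 - θ)`, so that the
gain error's own contraction absorbs the `b4 * p` it feeds into the plant. -/
theorem exists_add_mul_le_mul_add {V s p u : ℕ → ℝ} {b2 b3 b4 b5 θ cw : ℝ} (hb2 : 0 < b2)
    (hb3 : 0 < b3) (hb4 : 0 < b4) (hθ : θ < 1) (hV : ∀ m, 0 ≤ V m) (hs : ∀ m, 0 ≤ s m)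
    (hp : ∀ m, 0 ≤ p m) (hVup : ∀ m, V m ≤ b2 * s m)
    (hVdec : ∀ m, V (m + 1) - V m ≤ -b3 * s m + b4 * p m + b5 * u m)
    (hpdec : ∀ m, p (m + 1) ≤ θ * p m + cw * u m) :
    ∃ c > 0, ∃ ρ ∈ Set.Ioo (0 : ℝ) 1, ∀ m,
      V (m + 1) + c * p (m + 1) ≤ ρ * (V m + c * p m) + (b5 + c * cw) * u m := by
  set lam := min (b3 / b2) (1 / 2)
  have hlam : 0 < lam := lt_min (div_pos hb3 hb2) one_half_pos
  have hlamb : lam * b2 ≤ b3 := (le_div_iff₀ hb2).mp (min_le_left _ _)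
  set c := 2 * b4 / (1 - θ)
  have hc0 : 0 < c := div_pos (by positivity) (sub_pos.mpr hθ)
  have hc : c * (1 - θ) = 2 * b4 := div_mul_cancel₀ _ (sub_pos.mpr hθ).ne'
  set ρ := max (1 - lam) ((1 + θ) / 2)
  refine ⟨c, hc0,
    ρ, ⟨(by linarith [min_le_right (b3 / b2) (1 / 2)] : 0 < 1 - lam).trans_le (le_max_left _ _),
      max_lt (by linarith) (by linarith)⟩, fun m => ?_⟩
  have hplant : V m - b3 * s m ≤ ρ * V m := by
    have : lam * V m ≤ b3 * s m :=
      (mul_le_mul_of_nonneg_left (hVup m) hlam.le).trans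
        (by rw [← mul_assoc]; exact mul_le_mul_of_nonneg_right hlamb (hs m))
    linarith [mul_le_mul_of_nonneg_right (le_max_left (1 - lam) ((1 + θ) / 2)) (hV m)]
  have hgain : b4 * p m + c * θ * p m ≤ ρ * (c * p m) := by
    have hb4p : b4 * p m = c * (1 - θ) / 2 * p m := by rw [hc]; ring
    linarith [mul_le_mul_of_nonneg_right (le_max_right (1 - lam) ((1 + θ) / 2))
      (mul_nonneg hc0.le (hp m))]
  linarith [hVdec m, mul_le_mul_of_nonneg_left (hpdec m) hc0.le]

theorem min_mul_add_le {a b x y : ℝ} (hx : 0 ≤ x) (hy : 0 ≤ y) :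
    min a b * (x + y) ≤ a * x + b * y := by
  nlinarith [min_le_left a b, min_le_right a b]

theorem mul_add_le_max_mul {a b x y : ℝ} (hx : 0 ≤ x) (hy : 0 ≤ y) :
    a * x + b * y ≤ max a b * (x + y) := by
  nlinarith [le_max_left a b, le_max_right a b]

theorem sqrt_le_of_le_mul_pow_mul_add_mul_sq {s s₀ A B ρ M : ℝ} {m : ℕ} (hA : 0 ≤ A)
    (hB : 0 ≤ B) (hρ : 0 ≤ ρ) (hs₀ : 0 ≤ s₀) (hM : 0 ≤ M)
    (h : s ≤ A * ρ ^ m * s₀ + B * M ^ 2) :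
    √s ≤ √A * √ρ ^ m * √s₀ + √B * M := by
  have hX : (√A * √ρ ^ m * √s₀) ^ 2 = A * ρ ^ m * s₀ := by
    rw [mul_pow, mul_pow, pow_right_comm, Real.sq_sqrt hA, Real.sq_sqrt hρ, Real.sq_sqrt hs₀]
  have hY : (√B * M) ^ 2 = B * M ^ 2 := by rw [mul_pow, Real.sq_sqrt hB]
  rw [Real.sqrt_le_left (by positivity)]
  nlinarith [mul_nonneg (by positivity : 0 ≤ √A * √ρ ^ m * √s₀) (by positivity : 0 ≤ √B * M)]

theorem sqrt_le_of_le_mul_add {S W u : ℕ → ℝ} {a b ρ C M : ℝ} (ha : 0 < a) (hb : 0 ≤ b)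
    (hρ : 0 ≤ ρ) (hρ1 : ρ < 1) (hC : 0 ≤ C) (hM : 0 ≤ M) (hS₀ : 0 ≤ S 0)
    (hlow : ∀ m, a * S m ≤ W m) (hup : W 0 ≤ b * S 0)
    (hW : ∀ m, W (m + 1) ≤ ρ * W m + C * u m) {m : ℕ} (hu : ∀ j < m, u j ≤ M ^ 2) :
    √(S m) ≤ √(b / a) * √ρ ^ m * √(S 0) + √(C / (1 - ρ) / a) * M := by
  have hWm := le_pow_mul_add_of_le_mul_add hρ hρ1 hC (sq_nonneg M) hW m hu
  refine sqrt_le_of_le_mul_pow_mul_add_mul_sq (by positivity)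
    (div_nonneg (div_nonneg hC (sub_pos.mpr hρ1).le) ha.le) hρ hS₀ hM ?_
  calc S m ≤ W m / a := (le_div_iff₀' ha).mpr (hlow m)
    _ ≤ (ρ ^ m * (b * S 0) + C / (1 - ρ) * M ^ 2) / a := by
        gcongr; exact hWm.trans (by gcongr)
    _ = b / a * ρ ^ m * S 0 + C / (1 - ρ) / a * M ^ 2 := by ring

theorem rapid_iss_estimate_general
    {E1 F H : Type*} [NormedAddCommGroup E1]
    [NormedAddCommGroup F]
    [NormedAddCommGroup H] [InnerProductSpace ℝ H]
    (χ : ℕ → E1) (w : ℕ → F) (φ : ℕ → H)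
    (Vy : E1 → ℝ) (b1 b2 b3 b4 b5 : ℝ)
    (hb1 : 0 < b1) (hb2 : 0 < b2) (hb3 : 0 < b3) (hb4 : 0 < b4) (hb5 : 0 < b5)
    (φstar : H)
    (hVlow : ∀ m, b1 * ‖χ m‖ ^ 2 ≤ Vy (χ m))
    (hVup : ∀ m, Vy (χ m) ≤ b2 * ‖χ m‖ ^ 2)
    (hVdec : ∀ m, Vy (χ (m + 1)) - Vy (χ m)
      ≤ -b3 * ‖χ m‖ ^ 2 + b4 * ‖φ m - φstar‖ ^ 2 + b5 * ‖w m‖ ^ 2)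
    (Φ : Set H) (hconv : Convex ℝ Φ)
    (hφstar : φstar ∈ Φ)
    (proj : H → H)
    (hproj : ∀ x, proj x ∈ Φ ∧ ∀ y ∈ Φ, ‖x - proj x‖ ≤ ‖x - y‖)
    (g r : ℕ → H) (hr : ∀ m, ‖r m‖ ≤ ‖w m‖)
    (α : ℕ → ℝ) (μ L αlo αhi : ℝ)
    (hL : 0 < L)
    (hαlo : 0 < αlo) (hαhi : αhi < 2 * μ / L ^ 2)
    (hα : ∀ m, αlo ≤ α m ∧ α m ≤ αhi)
    (hupd : ∀ m, φ (m + 1) = proj (φ m - α m • (g m + r m)))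
    (hmono : ∀ m, μ * ‖φ m - φstar‖ ^ 2 ≤ @inner ℝ H _ (g m) (φ m - φstar))
    (hgrow : ∀ m, ‖g m‖ ≤ L * ‖φ m - φstar‖) :
    ∃ C1 > (0 : ℝ), ∃ C2 > (0 : ℝ), ∃ ρ ∈ Set.Ioo (0 : ℝ) 1,
      ∀ m, (hm : 1 ≤ m) →
        Real.sqrt (‖χ m‖ ^ 2 + ‖φ m - φstar‖ ^ 2)
          ≤ C1 * ρ ^ m * Real.sqrt (‖χ 0‖ ^ 2 + ‖φ 0 - φstar‖ ^ 2)
            + C2 * (Finset.range m).sup'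
                (Finset.nonempty_range_iff.mpr (Nat.one_le_iff_ne_zero.mp hm))
                (fun j => ‖w j‖) := by
  obtain ⟨θ, hθ, cw, hcw, hstep⟩ := exists_norm_sub_smul_add_sq_le (H := H) hL hαlo hαhi
  have hgain (m : ℕ) : ‖φ (m + 1) - φstar‖ ^ 2 ≤ θ * ‖φ m - φstar‖ ^ 2 + cw * ‖w m‖ ^ 2 := by
    have hnear : ‖φ (m + 1) - φstar‖ ≤ ‖φ m - α m • (g m + r m) - φstar‖ := by
      rw [hupd m]; exact hconv.norm_sub_le_of_forall_norm_sub_le (hproj _).1 (hproj _).2 hφstar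
    calc ‖φ (m + 1) - φstar‖ ^ 2 ≤ ‖(φ m - φstar) - α m • (g m + r m)‖ ^ 2 := by
          rw [sub_right_comm] at hnear; gcongr
      _ ≤ θ * ‖φ m - φstar‖ ^ 2 + cw * ‖r m‖ ^ 2 :=
          hstep _ _ _ _ (hα m).1 (hα m).2 (hmono m) (hgrow m)
      _ ≤ θ * ‖φ m - φstar‖ ^ 2 + cw * ‖w m‖ ^ 2 := by gcongr; exact hr m
  have hV (m : ℕ) : 0 ≤ Vy (χ m) := (by positivity : 0 ≤ b1 * ‖χ m‖ ^ 2).trans (hVlow m)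
  obtain ⟨c, hc, ρ, hρ, hW⟩ := exists_add_mul_le_mul_add (u := fun m => ‖w m‖ ^ 2)
    hb2 hb3 hb4 hθ hV (fun _ => sq_nonneg _) (fun _ => sq_nonneg _) hVup hVdec hgain
  refine ⟨√(max b2 c / min b1 c), by positivity,
    √((b5 + c * cw) / (1 - ρ) / min b1 c),
    Real.sqrt_pos.mpr (by have := sub_pos.mpr hρ.2; positivity),
    √ρ, ⟨Real.sqrt_pos.mpr hρ.1, (Real.sqrt_lt' one_pos).mpr (by simpa using hρ.2)⟩,
    fun m hm => ?_⟩
  have hsup : ∀ j < m, ‖w j‖ ≤ (Finset.range m).sup'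
      (Finset.nonempty_range_iff.mpr (Nat.one_le_iff_ne_zero.mp hm)) (fun j => ‖w j‖) :=
    fun j hj => Finset.le_sup' (fun j => ‖w j‖) (Finset.mem_range.mpr hj)
  exact sqrt_le_of_le_mul_add (S := fun m => ‖χ m‖ ^ 2 + ‖φ m - φstar‖ ^ 2)
    (W := fun m => Vy (χ m) + c * ‖φ m - φstar‖ ^ 2) (u := fun m => ‖w m‖ ^ 2)
    (lt_min hb1 hc) (by positivity) hρ.1.le hρ.2 (by positivity)
    ((norm_nonneg _).trans (hsup 0 hm)) (by positivity)
    (fun m => (min_mul_add_le (sq_nonneg _) (sq_nonneg _)).trans (add_le_add_left (hVlow m) _))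
    ((add_le_add_left (hVup 0) _).trans (mul_add_le_max_mul (sq_nonneg _) (sq_nonneg _)))
    hW fun j hj => pow_le_pow_left₀ (norm_nonneg _) (hsup j hj) 2

/-- Theorem 2 (main sampled-data ISS estimate for RAPID): under the
plant-regulation Lyapunov assumption and the projected risk-aware gain-update
assumption, there exist `C1, C2 > 0` and `ρ ∈ (0,1)` such that for all `m ≥ 1`,
`√(‖χ m‖² + ‖φ m − φ*‖²) ≤ C1·ρ^m·√(‖χ 0‖² + ‖φ 0 − φ*‖²)
  + C2·sup_{0 ≤ j ≤ m−1} ‖w j‖`;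
in particular, the sampled RAPID closed loop is locally input-to-state stable
with respect to the disturbance sequence `w`. -/
theorem rapid_iss_estimate
    {E1 F H : Type*} [NormedAddCommGroup E1] [NormedSpace ℝ E1]
    [NormedAddCommGroup F] [NormedSpace ℝ F]
    [NormedAddCommGroup H] [InnerProductSpace ℝ H] [CompleteSpace H]
    (χ : ℕ → E1) (w : ℕ → F) (φ : ℕ → H)
    (Vy : E1 → ℝ) (b1 b2 b3 b4 b5 : ℝ)
    (hb1 : 0 < b1) (hb2 : 0 < b2) (hb3 : 0 < b3) (hb4 : 0 < b4) (hb5 : 0 < b5)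
    (φstar : H)
    (hVlow : ∀ m, b1 * ‖χ m‖ ^ 2 ≤ Vy (χ m))
    (hVup : ∀ m, Vy (χ m) ≤ b2 * ‖χ m‖ ^ 2)
    (hVdec : ∀ m, Vy (χ (m + 1)) - Vy (χ m)
      ≤ -b3 * ‖χ m‖ ^ 2 + b4 * ‖φ m - φstar‖ ^ 2 + b5 * ‖w m‖ ^ 2)
    (Φ : Set H) (hne : Φ.Nonempty) (hclosed : IsClosed Φ) (hconv : Convex ℝ Φ)
    (hφstar : φstar ∈ Φ) (hφ0 : φ 0 ∈ Φ)
    (proj : H → H)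
    (hproj : ∀ x, proj x ∈ Φ ∧ ∀ y ∈ Φ, ‖x - proj x‖ ≤ ‖x - y‖)
    (g r : ℕ → H) (hr : ∀ m, ‖r m‖ ≤ ‖w m‖)
    (α : ℕ → ℝ) (μ L αlo αhi : ℝ)
    (hμ : 0 < μ) (hL : 0 < L)
    (hαlo : 0 < αlo) (hαle : αlo ≤ αhi) (hαhi : αhi < 2 * μ / L ^ 2)
    (hα : ∀ m, αlo ≤ α m ∧ α m ≤ αhi)
    (hupd : ∀ m, φ (m + 1) = proj (φ m - α m • (g m + r m)))
    (hmono : ∀ m, μ * ‖φ m - φstar‖ ^ 2 ≤ @inner ℝ H _ (g m) (φ m - φstar))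
    (hgrow : ∀ m, ‖g m‖ ≤ L * ‖φ m - φstar‖) :
    ∃ C1 > (0 : ℝ), ∃ C2 > (0 : ℝ), ∃ ρ ∈ Set.Ioo (0 : ℝ) 1,
      ∀ m, (hm : 1 ≤ m) →
        Real.sqrt (‖χ m‖ ^ 2 + ‖φ m - φstar‖ ^ 2)
          ≤ C1 * ρ ^ m * Real.sqrt (‖χ 0‖ ^ 2 + ‖φ 0 - φstar‖ ^ 2)
            + C2 * (Finset.range m).sup'
                (Finset.nonempty_range_iff.mpr (Nat.one_le_iff_ne_zero.mp hm))
                (fun j => ‖w j‖) :=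
  rapid_iss_estimate_general χ w φ Vy b1 b2 b3 b4 b5 hb1 hb2 hb3 hb4 hb5 φstar hVlow hVup hVdec Φ
    hconv hφstar proj hproj g r hr α μ L αlo αhi hL hαlo hαhi hα hupd hmono hgrow
end
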